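/- arXiv:2502.06157 — 2 statements merged into one kernel-verified Lean document; each statement's English description precedes it below -/
import Mathlib

section
/- Let I : ℝⁿ₋ → ℝ satisfy constant-additivity (I(x + α𝟏) = I(x) + α for all x and α ≤ 0 with x + α𝟏 in the domain), positive homogeneity (I(αx) = αI(x) for α ∈ [0,1]), and midpoint superadditivity on level sets (I(x) = I(y) implies I(x/2 + y/2) ≥ I(x)). Then I is midpoint concave: I(x/2 + y/2) ≥ (I(x) + I(y))/2 for all x, y ∈ ℝⁿ₋. -/
theorem stmt_4 (n : ℕ) (hn : 1 ≤ n) (I : (Fin n → ℝ) → ℝ)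
    (hadd : ∀ (x : Fin n → ℝ) (α : ℝ), α ≤ 0 → (∀ i, x i ≤ 0) →
      (∀ i, x i + α ≤ 0) → I (fun i => x i + α) = I x + α)
    (hhom : ∀ (α : ℝ), 0 ≤ α → α ≤ 1 → ∀ x : Fin n → ℝ, (∀ i, x i ≤ 0) →
      I (fun i => α * x i) = α * I x)
    (hmid : ∀ x y : Fin n → ℝ, (∀ i, x i ≤ 0) → (∀ i, y i ≤ 0) → I x = I y →
      I x ≤ I (fun i => x i / 2 + y i / 2)) :
    ∀ x y : Fin n → ℝ, (∀ i, x i ≤ 0) → (∀ i, y i ≤ 0) →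
      (I x + I y) / 2 ≤ I (fun i => x i / 2 + y i / 2) := by
  have key : ∀ x y : Fin n → ℝ, (∀ i, x i ≤ 0) → (∀ i, y i ≤ 0) → I x ≤ I y →
      (I x + I y) / 2 ≤ I (fun i => x i / 2 + y i / 2) := by
    intro x y hx hy hle
    set α := I x - I y with hα
    have hαle : α ≤ 0 := by simp [hα]; linarith
    have hyα : ∀ i, y i + α ≤ 0 := fun i => by have := hy i; linarith
    have h1 : I (fun i => y i + α) = I y + α := hadd y α hαle hy hyα
    have h2 : I x = I (fun i => y i + α) := by rw [h1]; simp [hα]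
    have h3 := hmid x (fun i => y i + α) hx hyα h2
    have h4 : (fun i => x i / 2 + (y i + α) / 2) =
        (fun i => (x i / 2 + y i / 2) + α / 2) := by funext i; ring
    have hz : ∀ i, x i / 2 + y i / 2 ≤ 0 := fun i => by
      have := hx i; have := hy i; linarith
    have hzα : ∀ i, (x i / 2 + y i / 2) + α / 2 ≤ 0 := fun i => by
      have := hz i; linarith
    have h5 : I (fun i => (x i / 2 + y i / 2) + α / 2) =
        I (fun i => x i / 2 + y i / 2) + α / 2 :=
      hadd _ (α / 2) (by linarith) hz hzα
    rw [h4, h5] at h3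
    simp [hα] at h3 ⊢
    linarith
  intro x y hx hy
  rcases le_total (I x) (I y) with h | h
  · exact key x y hx hy h
  · have := key y x hy hx h
    have heq : (fun i => y i / 2 + x i / 2) = (fun i => x i / 2 + y i / 2) := by
      funext i; ring
    rw [heq] at this; linarith
end

section
/- If W = Δ (the whole simplex), then for every x in the strictly positive orthant intersected with (0,1]ⁿ, min_{w∈Δ} ∏ᵢ xᵢ^{wᵢ} = minᵢ xᵢ. Consequently, the solution argmax_{x∈S} min_{w∈Δ} ∏ᵢ (xᵢ/bᵢ(S))^{wᵢ} coincides with the Kalai–Smorodinsky solution argmax_{x∈S} minᵢ xᵢ/bᵢ(S) when restricted to strictly positive vectors. -/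
lemma aux_min (n : ℕ) (hn : 1 ≤ n) (x : Fin n → ℝ) (hx : ∀ i, 0 < x i ∧ x i ≤ 1) :
    sInf {s : ℝ | ∃ w : Fin n → ℝ, ((∀ i, 0 ≤ w i) ∧ ∑ i, w i = 1) ∧
      s = ∏ i, x i ^ w i} = ⨅ i, x i := by
  haveI : Nonempty (Fin n) := ⟨⟨0, hn⟩⟩
  obtain ⟨i₀, hi₀⟩ := Finite.exists_min x
  have hiInf : (⨅ i, x i) = x i₀ :=
    le_antisymm (ciInf_le (Finite.bddBelow_range x) i₀) (le_ciInf hi₀)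
  rw [hiInf]
  apply IsLeast.csInf_eq
  constructor
  · refine ⟨fun j => if j = i₀ then 1 else 0, ⟨fun i => by positivity, by simp⟩, ?_⟩
    rw [Finset.prod_eq_single i₀]
    · simp
    · intro b _ hb; simp [hb]
    · simp
  · rintro s ⟨w, ⟨hw0, hw1⟩, rfl⟩
    calc x i₀ = x i₀ ^ (∑ i, w i) := by rw [hw1, Real.rpow_one]
    _ = ∏ i, x i₀ ^ w i := Real.rpow_sum_of_pos (hx i₀).1 w Finset.univ
    _ ≤ ∏ i, x i ^ w i := by
        apply Finset.prod_le_prod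
        · intro i _; exact Real.rpow_nonneg (hx i₀).1.le _
        · intro i _; exact Real.rpow_le_rpow (hx i₀).1.le (hi₀ i) (hw0 i)

theorem stmt_10 (n : ℕ) (hn : 1 ≤ n) :
    (∀ x : Fin n → ℝ, (∀ i, 0 < x i ∧ x i ≤ 1) →
      sInf {s : ℝ | ∃ w : Fin n → ℝ, ((∀ i, 0 ≤ w i) ∧ ∑ i, w i = 1) ∧
        s = ∏ i, x i ^ w i} = ⨅ i, x i) ∧
    (∀ (S : Set (Fin n → ℝ)), S.Nonempty → IsCompact S → (∀ x ∈ S, ∀ i, 0 ≤ x i) →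
      ∀ b : Fin n → ℝ, (∀ i, IsGreatest ((fun x => x i) '' S) (b i)) → (∀ i, 0 < b i) →
        {x ∈ S | (∀ i, 0 < x i) ∧ ∀ y ∈ S, (∀ i, 0 < y i) →
          sInf {s : ℝ | ∃ w : Fin n → ℝ, ((∀ i, 0 ≤ w i) ∧ ∑ i, w i = 1) ∧
            s = ∏ i, (y i / b i) ^ w i} ≤
          sInf {s : ℝ | ∃ w : Fin n → ℝ, ((∀ i, 0 ≤ w i) ∧ ∑ i, w i = 1) ∧
            s = ∏ i, (x i / b i) ^ w i}} =
        {x ∈ S | (∀ i, 0 < x i) ∧ ∀ y ∈ S, (∀ i, 0 < y i) →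
          (⨅ i, y i / b i) ≤ ⨅ i, x i / b i}) := by
  constructor
  · exact fun x hx => aux_min n hn x hx
  · intro S _ _ _ b hb hbpos
    have key : ∀ z ∈ S, (∀ i, 0 < z i) →
        sInf {s : ℝ | ∃ w : Fin n → ℝ, ((∀ i, 0 ≤ w i) ∧ ∑ i, w i = 1) ∧
          s = ∏ i, (z i / b i) ^ w i} = ⨅ i, z i / b i := by
      intro z hz hzpos
      refine aux_min n hn _ (fun i => ⟨div_pos (hzpos i) (hbpos i), ?_⟩)
      exact (div_le_one (hbpos i)).mpr ((hb i).2 ⟨z, hz, rfl⟩)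
    ext x
    simp only [Set.mem_setOf_eq]
    constructor
    · rintro ⟨hxS, hxpos, h⟩
      exact ⟨hxS, hxpos, fun y hy hypos => by
        rw [← key y hy hypos, ← key x hxS hxpos]; exact h y hy hypos⟩
    · rintro ⟨hxS, hxpos, h⟩
      exact ⟨hxS, hxpos, fun y hy hypos => by
        rw [key y hy hypos, key x hxS hxpos]; exact h y hy hypos⟩
end
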